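/- arXiv:2311.14610 — 5 statements merged into one kernel-verified Lean document; each statement's English description precedes it below -/
import Mathlib

section
/- Let X be a nonempty finite set and r : X × X → X × X an involutive map satisfying the set-theoretic Yang–Baxter equation, with linearization T. Then the twisted symmetrizers P_{T,n} are injective for all n ∈ ℕ if and only if r = id on X × X. -/
/-- The first leg map `r₁(x,y,z) = (r(x,y).1, r(x,y).2, z)`. -/
def ybeLeg1 {X : Type*} (r : X × X → X × X) : X × X × X → X × X × X :=
  fun p => ((r (p.1, p.2.1)).1, (r (p.1, p.2.1)).2, p.2.2)

/-- The second leg map `r₂(x,y,z) = (x, r(y,z).1, r(y,z).2)`. -/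
def ybeLeg2 {X : Type*} (r : X × X → X × X) : X × X × X → X × X × X :=
  fun p => (p.1, r p.2)

/-- The set-theoretic Yang–Baxter equation. -/
def SetTheoreticYBE {X : Type*} (r : X × X → X × X) : Prop :=
  ybeLeg1 r ∘ ybeLeg2 r ∘ ybeLeg1 r = ybeLeg2 r ∘ ybeLeg1 r ∘ ybeLeg2 r

/-- The map `σ_k` applying `r` to the coordinates `k-1, k` (0-indexed) of a word in `Fin n → X`,
for `1 ≤ k ≤ n - 1`; it is the identity outside this range of `k`. -/
def sigmaMap {X : Type*} [DecidableEq X] (r : X × X → X × X) (n k : ℕ) (f : Fin n → X) :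
    Fin n → X :=
  if h : 1 ≤ k ∧ k < n then
    fun j =>
      if j = (⟨k - 1, by omega⟩ : Fin n) then (r (f ⟨k - 1, by omega⟩, f ⟨k, h.2⟩)).1
      else if j = (⟨k, h.2⟩ : Fin n) then (r (f ⟨k - 1, by omega⟩, f ⟨k, h.2⟩)).2
      else f j
  else f

/-- The matrix of the operator `T_k` on `EuclideanSpace ℂ (Fin n → X)` determined by
`T_k(e_f) = e_{σ_k f}`. -/
def sigmaTMat {X : Type*} [Fintype X] [DecidableEq X] (r : X × X → X × X) (n k : ℕ) :
    Matrix (Fin n → X) (Fin n → X) ℂ :=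
  Matrix.of fun g f => if g = sigmaMap r n k f then 1 else 0

/-- The ampliation `E_n(P)` acting as the identity on the 0-th coordinate and as `P` on the
remaining `n` coordinates. -/
def ampMat {X : Type*} [DecidableEq X] (n : ℕ) (P : Matrix (Fin n → X) (Fin n → X) ℂ) :
    Matrix (Fin (n + 1) → X) (Fin (n + 1) → X) ℂ :=
  Matrix.of fun g f => if g 0 = f 0 then P (g ∘ Fin.succ) (f ∘ Fin.succ) else 0

/-- The twisted symmetrizers `P_{T,n}`, defined by the left recursion
`P_{T,n+1} = E_n(P_{T,n}) * (1 + T_1 + T_1 T_2 + ⋯ + T_1 ⋯ T_n)`. -/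
noncomputable def twistedSymmetrizer {X : Type*} [Fintype X] [DecidableEq X] (r : X × X → X × X) :
    (n : ℕ) → Matrix (Fin n → X) (Fin n → X) ℂ
  | 0 => 1
  | n + 1 =>
      ampMat n (twistedSymmetrizer r n) *
        ∑ k ∈ Finset.range (n + 1),
          ((List.range k).map (fun j => sigmaTMat r (n + 1) (j + 1))).prod

/-! For `r = id` every `T_k` is the identity, so `P_{T,n} = n! • 1`. Otherwise choose `p` with
`r p ≠ p`: on words of length two `σ_1` is an involution moving `f = (p.1, p.2)`, and
`P_{T,2} = 1 + T_1` sends both `e_f` and `e_{σ_1 f}` to `e_f + e_{σ_1 f}`. -/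

open scoped Matrix

theorem Matrix.injective_toEuclideanCLM_iff {𝕜 n : Type*} [RCLike 𝕜] [Fintype n]
    [DecidableEq n] {A : Matrix n n 𝕜} :
    Function.Injective (Matrix.toEuclideanCLM (𝕜 := 𝕜) A) ↔ Function.Injective A.mulVec :=
  ⟨fun h _ _ hxy => WithLp.toLp_injective 2 (h (by simp [hxy])),
    fun h _ _ hxy => WithLp.ofLp_injective 2 (h (by simpa using congrArg WithLp.ofLp hxy))⟩

section

variable {X : Type*} [DecidableEq X]

theorem sigmaMap_involutive {r : X × X → X × X} (hr : Function.Involutive r) (n k : ℕ) :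
    Function.Involutive (sigmaMap r n k) := by
  intro f
  unfold sigmaMap
  split_ifs with h
  · funext j
    have hne : (⟨k, h.2⟩ : Fin n) ≠ ⟨k - 1, by omega⟩ := by simp [Fin.ext_iff]; omega
    simp only [hne, if_true, if_false, Prod.mk.eta, hr _]
    split_ifs <;> simp_all
  · rfl

theorem sigmaMap_id (n k : ℕ) : sigmaMap (X := X) id n k = id := by
  funext f
  unfold sigmaMap
  split_ifs
  · funext j
    split_ifs <;> simp_all
  · rfl

theorem sigmaMap_two (r : X × X → X × X) (x y : X) :
    sigmaMap r 2 1 ![x, y] = ![(r (x, y)).1, (r (x, y)).2] := by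
  funext j
  fin_cases j <;> simp [sigmaMap]

theorem ampMat_one (n : ℕ) : ampMat (X := X) n (1 : Matrix _ _ ℂ) = 1 := by
  ext g f
  simp only [ampMat, Matrix.of_apply, Matrix.one_apply]
  by_cases h : g = f
  · simp [h]
  · have : ¬(g 0 = f 0 ∧ g ∘ Fin.succ = f ∘ Fin.succ) := fun ⟨h0, hs⟩ =>
      h (funext fun j => Fin.cases h0 (congrFun hs) j)
    grind

theorem ampMat_smul (n : ℕ) (c : ℂ) (P : Matrix (Fin n → X) (Fin n → X) ℂ) :
    ampMat n (c • P) = c • ampMat n P := by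
  ext g f
  simp only [ampMat, Matrix.of_apply, Matrix.smul_apply, smul_eq_mul]
  split_ifs <;> simp

variable [Fintype X]

theorem sigmaTMat_mulVec_single (r : X × X → X × X) (n k : ℕ) (f : Fin n → X) :
    sigmaTMat r n k *ᵥ Pi.single f 1 = Pi.single (sigmaMap r n k f) 1 := by
  funext g
  simp [sigmaTMat, Pi.single_apply]

theorem sigmaTMat_id (n k : ℕ) : sigmaTMat (X := X) id n k = 1 := by
  ext g f
  simp [sigmaTMat, sigmaMap_id, Matrix.one_apply]

theorem twistedSymmetrizer_succ (r : X × X → X × X) (n : ℕ) :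
    twistedSymmetrizer r (n + 1) = ampMat n (twistedSymmetrizer r n) *
      ∑ k ∈ Finset.range (n + 1),
        ((List.range k).map (fun j => sigmaTMat r (n + 1) (j + 1))).prod :=
  rfl

theorem twistedSymmetrizer_id (n : ℕ) :
    twistedSymmetrizer (X := X) id n = (n.factorial : ℂ) • 1 := by
  induction n with
  | zero => simp [twistedSymmetrizer]
  | succ n ih =>
    simp only [twistedSymmetrizer_succ, ih, ampMat_smul, ampMat_one, sigmaTMat_id,
      List.map_const', List.prod_replicate, one_pow, Finset.sum_const, Finset.card_range,
      smul_mul_assoc, one_mul, smul_smul, ← Nat.cast_smul_eq_nsmul ℂ]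
    push_cast [Nat.factorial_succ]
    ring_nf

theorem twistedSymmetrizer_two (r : X × X → X × X) :
    twistedSymmetrizer r 2 = 1 + sigmaTMat r 2 1 := by
  simp [twistedSymmetrizer, ampMat_one, Finset.sum_range_succ, List.range_succ]

theorem twistedSymmetrizer_two_mulVec_single (r : X × X → X × X) (f : Fin 2 → X) :
    twistedSymmetrizer r 2 *ᵥ Pi.single f 1 = Pi.single f 1 + Pi.single (sigmaMap r 2 1 f) 1 := by
  rw [twistedSymmetrizer_two, Matrix.add_mulVec, Matrix.one_mulVec, sigmaTMat_mulVec_single]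

theorem not_injective_twistedSymmetrizer_two {r : X × X → X × X} (hr : Function.Involutive r)
    {p : X × X} (hp : r p ≠ p) : ¬Function.Injective (twistedSymmetrizer r 2).mulVec := by
  set f : Fin 2 → X := ![p.1, p.2]
  have hσf : f ≠ sigmaMap r 2 1 f := fun h => hp <| by
    have := congrFun h
    simp only [f, sigmaMap_two, Fin.forall_fin_two] at this
    exact Prod.ext this.1.symm this.2.symm
  intro hinj
  have hsingle := hinj (a₁ := Pi.single f (1 : ℂ)) (a₂ := Pi.single (sigmaMap r 2 1 f) 1) <| by
    rw [twistedSymmetrizer_two_mulVec_single, twistedSymmetrizer_two_mulVec_single,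
      sigmaMap_involutive hr, add_comm]
  simpa [Pi.single_apply, hσf] using congrFun hsingle f

end

theorem twistedSymmetrizer_injective_iff_id_general
    {X : Type*} [Fintype X] [DecidableEq X]
    (r : X × X → X × X) (hinv : r ∘ r = id) :
    (∀ n : ℕ, Function.Injective
      (Matrix.toEuclideanCLM (𝕜 := ℂ) (twistedSymmetrizer r n))) ↔ r = id := by
  constructor
  · intro hinj
    by_contra hne
    obtain ⟨p, hp⟩ := Function.ne_iff.mp hne
    have hr : Function.Involutive r := congrFun hinv
    exact not_injective_twistedSymmetrizer_two hr hp
      (Matrix.injective_toEuclideanCLM_iff.mp (hinj 2))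
  · rintro rfl n
    rw [Matrix.injective_toEuclideanCLM_iff, twistedSymmetrizer_id]
    intro v w hvw
    simp only [Matrix.smul_mulVec, Matrix.one_mulVec] at hvw
    exact smul_right_injective _ (Nat.cast_ne_zero.mpr n.factorial_ne_zero) hvw

/-- for an involutive set-theoretic solution `r` of the YBE on a nonempty finite
set `X` with linearization `T`, the twisted symmetrizers `P_{T,n}` are injective for all `n`
iff `r = id`. -/
theorem twistedSymmetrizer_injective_iff_id
    {X : Type*} [Fintype X] [DecidableEq X] [Nonempty X]
    (r : X × X → X × X) (hYBE : SetTheoreticYBE r) (hinv : r ∘ r = id) :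
    (∀ n : ℕ, Function.Injective
      (Matrix.toEuclideanCLM (𝕜 := ℂ) (twistedSymmetrizer r n))) ↔ r = id :=
  twistedSymmetrizer_injective_iff_id_general r hinv
end

section
/- Let X be a nonempty finite set and r : X × X → X × X an involutive map satisfying the set-theoretic Yang–Baxter equation. For each n ≥ 2 and 1 ≤ k ≤ n−1, let σ_k be the permutation of (Fin n → X) applying r to the pair of coordinates (k−1, k). Then there exists a group homomorphism ρ from the symmetric group Equiv.Perm (Fin n) to Equiv.Perm (Fin n → X) such that ρ sends the adjacent transposition of k−1 and k to σ_k for every 1 ≤ k ≤ n−1. -/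
/-!
The adjacent transpositions `sᵢ = (i, i+1)` present the symmetric group `S_{n+1}` as the Coxeter
group of type `Aₙ`: `sᵢ² = 1`, `sᵢ sᵢ₊₁ sᵢ = sᵢ₊₁ sᵢ sᵢ₊₁`, and `sᵢ sⱼ = sⱼ sᵢ` for `|i - j| ≥ 2`.
The maps `σ_k` satisfy these relations: the first is involutivity of `r`, the braid relation is
the Yang–Baxter equation evaluated on the three coordinates involved, and maps acting on disjoint
pairs of coordinates commute. So `sᵢ ↦ σ_{i+1}` extends to a homomorphism.

The presentation itself comes down to the injectivity of the canonical map from the Coxeter group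
`W_{n+1}` of type `A_{n+1}` onto `S_{n+2}`. Every `w ∈ W_{n+1}` can be written as
`(s_j s_{j+1} ⋯ s_n) · w'` with `w'` in the image of `W_n`; the image of `w` sends the last point to
`j`, so an element of the kernel has `j = n + 1`, and induction on `n` applies to `w'`.
-/

open Equiv

section Involutions

variable {G : Type*} [Group G] {a b : G}

theorem mul_pow_three_eq_one_iff (ha : a * a = 1) (hb : b * b = 1) :
    (a * b) ^ 3 = 1 ↔ a * b * a = b * a * b := by
  have hbab : (b * a * b)⁻¹ = b * a * b := by
    simp only [mul_inv_rev, inv_eq_of_mul_eq_one_right ha, inv_eq_of_mul_eq_one_right hb, mul_assoc]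
  have hcube : (a * b) ^ 3 = a * b * a * (b * a * b) := by
    simp only [pow_succ, pow_zero, one_mul, mul_assoc]
  rw [hcube, mul_eq_one_iff_eq_inv, hbab]

theorem mul_pow_two_eq_one_iff (ha : a * a = 1) (hb : b * b = 1) :
    (a * b) ^ 2 = 1 ↔ a * b = b * a := by
  rw [pow_two, mul_eq_one_iff_eq_inv, mul_inv_rev, inv_eq_of_mul_eq_one_right ha,
    inv_eq_of_mul_eq_one_right hb]

end Involutions

theorem CoxeterMatrix.isLiftable_A_iff {G : Type*} [Group G] {n : ℕ} {g : Fin n → G} :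
    (CoxeterMatrix.A n).IsLiftable g ↔ (∀ i, g i * g i = 1) ∧
      (∀ i j : Fin n, (i : ℕ) + 1 = j → g i * g j * g i = g j * g i * g j) ∧
      (∀ i j : Fin n, (i : ℕ) + 1 < j → g i * g j = g j * g i) := by
  constructor
  · intro h
    have hsq (i : Fin n) : g i * g i = 1 := by simpa [CoxeterMatrix.A] using h i i
    refine ⟨hsq, fun i j hij => ?_, fun i j hij => ?_⟩
    · rw [← mul_pow_three_eq_one_iff (hsq i) (hsq j)]
      simpa [CoxeterMatrix.A, hij, Fin.ext_iff, show (i : ℕ) ≠ j by omega] using h i j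
    · rw [← mul_pow_two_eq_one_iff (hsq i) (hsq j)]
      simpa [CoxeterMatrix.A, Fin.ext_iff, show (i : ℕ) ≠ j by omega, show (j : ℕ) + 1 ≠ i by omega,
        show (i : ℕ) + 1 ≠ j by omega] using h i j
  · rintro ⟨hsq, hbraid, hcomm⟩ i j
    simp only [CoxeterMatrix.A, Matrix.of_apply]
    split_ifs with hij hadj
    · rw [hij, pow_one, hsq]
    · rw [mul_pow_three_eq_one_iff (hsq i) (hsq j)]
      rcases hadj with h | h
      · exact (hbraid j i h).symm
      · exact hbraid i j h
    · rw [mul_pow_two_eq_one_iff (hsq i) (hsq j)]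
      rcases lt_or_gt_of_ne (Fin.val_ne_of_ne hij) with h | h
      · exact hcomm i j (by omega)
      · exact (hcomm j i (by omega)).symm

theorem Equiv.swap_braid {α : Type*} [DecidableEq α] {x y z : α} (hxy : x ≠ y) (hyz : y ≠ z)
    (hxz : x ≠ z) : swap x y * swap y z * swap x y = swap y z * swap x y * swap y z := by
  rw [swap_mul_swap_mul_swap hxy hxz]
  nth_rewrite 2 [← swap_inv x y]
  rw [← swap_apply_apply, swap_apply_right, swap_apply_of_ne_of_ne hxz.symm hyz.symm, swap_comm]

open CoxeterMatrix (A)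

namespace CoxeterMatrix.A

variable (n : ℕ)

theorem isLiftable_simple : (A n).IsLiftable (A n).simple :=
  (A n).toCoxeterSystem.simple_mul_simple_pow

theorem isLiftable_swap : (A n).IsLiftable fun i : Fin n => swap i.castSucc i.succ := by
  refine isLiftable_A_iff.mpr ⟨fun i => swap_mul_self _ _, fun i j hij => ?_, fun i j hij => ?_⟩
  · rw [show i.succ = j.castSucc from Fin.ext (by simp [hij])]
    exact swap_braid (by simp [Fin.ext_iff]; omega) (by simp [Fin.ext_iff])
      (by simp [Fin.ext_iff]; omega)
  · exact (Perm.disjoint_swap_swap (by simp [Fin.ext_iff]; omega)).commute.eq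

theorem isLiftable_simple_castSucc : (A n).IsLiftable fun i => (A (n + 1)).simple i.castSucc :=
  fun i j => by
    simpa [CoxeterMatrix.A, Fin.ext_iff] using isLiftable_simple (n + 1) i.castSucc j.castSucc

def toPerm : (A n).Group →* Perm (Fin (n + 1)) :=
  (A n).toCoxeterSystem.lift ⟨_, isLiftable_swap n⟩

def inclusion : (A n).Group →* (A (n + 1)).Group :=
  (A n).toCoxeterSystem.lift ⟨_, isLiftable_simple_castSucc n⟩

variable {n}

@[simp]
theorem toPerm_simple (i : Fin n) : toPerm n ((A n).simple i) = swap i.castSucc i.succ :=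
  (A n).toCoxeterSystem.lift_apply_simple (isLiftable_swap n) i

@[simp]
theorem inclusion_simple (i : Fin n) :
    inclusion n ((A n).simple i) = (A (n + 1)).simple i.castSucc :=
  (A n).toCoxeterSystem.lift_apply_simple (isLiftable_simple_castSucc n) i

theorem toPerm_surjective : Function.Surjective (toPerm n) := by
  rw [← MonoidHom.mrange_eq_top, eq_top_iff, ← Perm.mclosure_swap_castSucc_succ,
    Submonoid.closure_le]
  rintro _ ⟨i, rfl⟩
  exact ⟨_, toPerm_simple i⟩

theorem toPerm_inclusion_apply_castSucc (w : (A n).Group) (x : Fin (n + 1)) :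
    toPerm (n + 1) (inclusion n w) x.castSucc = (toPerm n w x).castSucc := by
  induction w using (A n).toCoxeterSystem.simple_induction_left with
  | one => rfl
  | mul_simple_left w i ih =>
    simp only [toCoxeterSystem_simple, map_mul, Perm.mul_apply, inclusion_simple, toPerm_simple, ih]
    rw [Fin.succ_castSucc, (Fin.castSucc_injective _).swap_apply]

theorem toPerm_inclusion_apply_last (w : (A n).Group) :
    toPerm (n + 1) (inclusion n w) (Fin.last (n + 1)) = Fin.last (n + 1) := by
  induction w using (A n).toCoxeterSystem.simple_induction_left with
  | one => rfl
  | mul_simple_left w i ih =>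
    simp only [toCoxeterSystem_simple, map_mul, Perm.mul_apply, inclusion_simple, toPerm_simple, ih]
    rw [Fin.succ_castSucc]
    exact swap_apply_of_ne_of_ne (Fin.castSucc_ne_last _).symm (Fin.castSucc_ne_last _).symm

/-- `s_j`, with the junk value `1` for `n ≤ j`. -/
def simpleNat (n j : ℕ) : (A n).Group :=
  if h : j < n then (A n).simple ⟨j, h⟩ else 1

theorem simpleNat_mul_self (j : ℕ) : simpleNat n j * simpleNat n j = 1 := by
  unfold simpleNat
  split_ifs
  · exact (A n).toCoxeterSystem.simple_mul_simple_self _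
  · exact mul_one 1

theorem simpleNat_mul_comm {j l : ℕ} (h : j + 1 < l) :
    simpleNat n j * simpleNat n l = simpleNat n l * simpleNat n j := by
  unfold simpleNat
  split_ifs with hj hl
  · exact (isLiftable_A_iff.mp (isLiftable_simple n)).2.2 _ _ h
  all_goals simp

theorem simpleNat_braid {j : ℕ} (h : j + 1 < n) :
    simpleNat n j * simpleNat n (j + 1) * simpleNat n j =
      simpleNat n (j + 1) * simpleNat n j * simpleNat n (j + 1) := by
  rw [simpleNat, simpleNat, dif_pos (by omega), dif_pos h]
  exact (isLiftable_A_iff.mp (isLiftable_simple n)).2.1 _ _ rfl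

theorem inclusion_simpleNat {j : ℕ} (h : j < n) :
    inclusion n (simpleNat n j) = simpleNat (n + 1) j := by
  rw [simpleNat, simpleNat, dif_pos h, dif_pos (by omega), inclusion_simple]
  rfl

variable (n) in
/-- A lift of the cycle `(j j+1 … j+k)`. -/
def cycle : ℕ → ℕ → (A n).Group
  | 0, _ => 1
  | k + 1, j => simpleNat n j * cycle k (j + 1)

theorem simpleNat_mul_cycle_of_lt {i j : ℕ} (k : ℕ) (h : i + 1 < j) :
    simpleNat n i * cycle n k j = cycle n k j * simpleNat n i := by
  induction k generalizing j with
  | zero => simp [cycle]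
  | succ k ih =>
    rw [cycle, ← mul_assoc, simpleNat_mul_comm h, mul_assoc, ih (by omega), mul_assoc]

theorem simpleNat_mul_cycle_of_mem {i j : ℕ} (k : ℕ) (h₁ : j < i) (h₂ : i < j + k) (h₃ : i < n) :
    simpleNat n i * cycle n k j = cycle n k j * simpleNat n (i - 1) := by
  induction k generalizing j with
  | zero => omega
  | succ k ih =>
    rw [cycle]
    rcases Nat.lt_or_ge (j + 1) i with hlt | hle
    · rw [← mul_assoc, ← simpleNat_mul_comm hlt, mul_assoc, ih hlt (by omega), mul_assoc]
    · obtain rfl : i = j + 1 := by omega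
      obtain ⟨k, rfl⟩ : ∃ k', k = k' + 1 := ⟨k - 1, by omega⟩
      rw [cycle, Nat.add_sub_cancel]
      calc simpleNat n (j + 1) * (simpleNat n j * (simpleNat n (j + 1) * cycle n k (j + 1 + 1)))
          = simpleNat n j * simpleNat n (j + 1) * (simpleNat n j * cycle n k (j + 2)) := by
            rw [← mul_assoc, ← mul_assoc, ← simpleNat_braid h₃]; simp only [mul_assoc]
        _ = _ := by rw [simpleNat_mul_cycle_of_lt k (by omega)]; simp only [mul_assoc]

/-- The Coxeter-group counterpart of `π = (π (last) … last) ∘ π'` with `π'` fixing `last`. -/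
theorem exists_eq_cycle_mul_inclusion (w : (A (n + 1)).Group) :
    ∃ j ≤ n + 1, ∃ w' : (A n).Group, w = cycle (n + 1) (n + 1 - j) j * inclusion n w' := by
  induction w using (A (n + 1)).toCoxeterSystem.simple_induction_left with
  | one => exact ⟨n + 1, le_rfl, 1, by simp [cycle]⟩
  | mul_simple_left w i ih =>
    obtain ⟨j, hj, w', rfl⟩ := ih
    obtain ⟨i, hi⟩ := i
    have hs : (A (n + 1)).toCoxeterSystem.simple ⟨i, hi⟩ = simpleNat (n + 1) i := by
      rw [simpleNat, dif_pos hi, toCoxeterSystem_simple]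
    rw [hs, ← mul_assoc]
    rcases lt_trichotomy (i + 1) j with hlt | heq | hgt
    · refine ⟨j, hj, simpleNat n i * w', ?_⟩
      rw [simpleNat_mul_cycle_of_lt _ hlt, map_mul, inclusion_simpleNat (by omega), mul_assoc]
    · refine ⟨i, by omega, w', ?_⟩
      rw [show n + 1 - i = n + 1 - j + 1 by omega, cycle, heq]
    · obtain hji | hij : j = i ∨ j < i := by omega
      · subst hji
        refine ⟨j + 1, by omega, w', ?_⟩
        rw [show n + 1 - j = n + 1 - (j + 1) + 1 by omega, cycle, ← mul_assoc,
          simpleNat_mul_self, one_mul]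
      · refine ⟨j, hj, simpleNat n (i - 1) * w', ?_⟩
        rw [simpleNat_mul_cycle_of_mem _ hij (by omega) hi, map_mul,
          inclusion_simpleNat (by omega), mul_assoc]

theorem toPerm_cycle_apply {j k : ℕ} (h : j + k ≤ n) :
    (toPerm n (cycle n k j) ⟨j + k, by omega⟩ : ℕ) = j := by
  induction k generalizing j with
  | zero => simp [cycle]
  | succ k ih =>
    have hj : j < n := by omega
    rw [cycle, map_mul, Perm.mul_apply, simpleNat, dif_pos hj, toPerm_simple]
    rw [show (⟨j + (k + 1), _⟩ : Fin (n + 1)) = ⟨j + 1 + k, by omega⟩ from Fin.ext (by simp; omega)]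
    rw [show (toPerm n (cycle n k (j + 1)) ⟨j + 1 + k, by omega⟩) = (⟨j, hj⟩ : Fin n).succ from
      Fin.ext (ih (by omega)), swap_apply_right]
    rfl

theorem eq_one_of_zero (w : (A 0).Group) : w = 1 := by
  induction w using (A 0).toCoxeterSystem.simple_induction_left with
  | one => rfl
  | mul_simple_left w i _ => exact i.elim0

theorem toPerm_injective : ∀ n, Function.Injective (toPerm n)
  | 0 => fun w w' _ => by rw [eq_one_of_zero w, eq_one_of_zero w']
  | n + 1 => by
    refine (injective_iff_map_eq_one _).mpr fun w hw => ?_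
    obtain ⟨j, hj, w', rfl⟩ := exists_eq_cycle_mul_inclusion w
    have hlast := congrArg Fin.val (congrArg (· (Fin.last (n + 1))) hw)
    simp only [map_mul, Perm.mul_apply, toPerm_inclusion_apply_last, Perm.one_apply,
      Fin.val_last] at hlast
    rw [show Fin.last (n + 1) = ⟨j + (n + 1 - j), by omega⟩ from Fin.ext (by simp; omega),
      toPerm_cycle_apply (by omega)] at hlast
    subst hlast
    rw [Nat.sub_self, cycle, one_mul] at hw ⊢
    have hw' : toPerm n w' = 1 := Equiv.ext fun x => Fin.castSucc_injective _ <| by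
      rw [← toPerm_inclusion_apply_castSucc, hw, Perm.one_apply, Perm.one_apply]
    rw [toPerm_injective n (hw'.trans (map_one _).symm), map_one]

end CoxeterMatrix.A

open CoxeterMatrix.A in
theorem Equiv.Perm.exists_monoidHom_of_coxeter_relations {G : Type*} [Group G] {n : ℕ}
    (g : Fin n → G) (hsq : ∀ i, g i * g i = 1)
    (hbraid : ∀ i j : Fin n, (i : ℕ) + 1 = j → g i * g j * g i = g j * g i * g j)
    (hcomm : ∀ i j : Fin n, (i : ℕ) + 1 < j → g i * g j = g j * g i) :
    ∃ ρ : Perm (Fin (n + 1)) →* G, ∀ i, ρ (swap i.castSucc i.succ) = g i := by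
  let e := MulEquiv.ofBijective (toPerm n) ⟨toPerm_injective n, toPerm_surjective⟩
  let ψ := (A n).toCoxeterSystem.lift ⟨g, CoxeterMatrix.isLiftable_A_iff.mpr ⟨hsq, hbraid, hcomm⟩⟩
  refine ⟨ψ.comp e.symm.toMonoidHom, fun i => ?_⟩
  have he : e.symm (swap i.castSucc i.succ) = (A n).simple i :=
    e.symm_apply_eq.mpr (toPerm_simple i).symm
  simp only [MonoidHom.comp_apply, MulEquiv.coe_toMonoidHom, he]
  exact (A n).toCoxeterSystem.lift_apply_simple _ i

section YangBaxter

variable {ι X : Type*} [DecidableEq ι] (r : X × X → X × X)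

def applyAt (a b : ι) (f : ι → X) : ι → X :=
  Function.update (Function.update f a (r (f a, f b)).1) b (r (f a, f b)).2

variable {r}

theorem applyAt_involutive (hinv : r ∘ r = id) {a b : ι} (hab : a ≠ b) :
    Function.Involutive (applyAt r a b) := by
  have hr (p : X × X) : r (r p) = p := congrFun hinv p
  intro f
  funext c
  simp only [applyAt, Function.update_apply]
  split_ifs <;> simp_all

theorem applyAt_comm {a b c d : ι} (hac : a ≠ c) (had : a ≠ d)
    (hbc : b ≠ c) (hbd : b ≠ d) (f : ι → X) :
    applyAt r a b (applyAt r c d f) = applyAt r c d (applyAt r a b f) := by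
  funext e
  simp only [applyAt, Function.update_apply]
  split_ifs <;> simp_all

theorem applyAt_braid (hYBE : SetTheoreticYBE r) {a b c : ι} (hab : a ≠ b) (hbc : b ≠ c)
    (hac : a ≠ c) (f : ι → X) :
    applyAt r a b (applyAt r b c (applyAt r a b f)) =
      applyAt r b c (applyAt r a b (applyAt r b c f)) := by
  have hY := congrFun hYBE (f a, f b, f c)
  simp only [Function.comp_apply, ybeLeg1, ybeLeg2, Prod.ext_iff] at hY
  funext d
  simp only [applyAt, Function.update_apply]
  split_ifs <;> simp_all

theorem sigmaMap_eq_applyAt [DecidableEq X] {n k : ℕ} (h₁ : 1 ≤ k) (h₂ : k < n) :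
    sigmaMap r n k = applyAt r ⟨k - 1, Nat.sub_lt_of_lt h₂⟩ ⟨k, h₂⟩ := by
  funext f j
  simp only [sigmaMap, dif_pos (And.intro h₁ h₂), applyAt, Function.update_apply]
  split_ifs with ha hb <;> try rfl
  exact absurd (Fin.mk.inj_iff.mp (ha.symm.trans hb)) (by omega)

end YangBaxter

section Adjacent

variable {X : Type*} {r : X × X → X × X} {n : ℕ}

/-- `σ_{i+1}` in the indexing of `sigmaMap`. -/
def adjacentPerm (hinv : r ∘ r = id) (i : Fin n) : Perm (Fin (n + 1) → X) :=
  (applyAt_involutive hinv (Fin.castSucc_lt_succ (i := i)).ne).toPerm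

theorem adjacentPerm_mul_self (hinv : r ∘ r = id) (i : Fin n) :
    adjacentPerm hinv i * adjacentPerm hinv i = 1 :=
  Equiv.ext (applyAt_involutive hinv Fin.castSucc_lt_succ.ne)

theorem adjacentPerm_braid (hYBE : SetTheoreticYBE r) (hinv : r ∘ r = id) {i j : Fin n}
    (hij : (i : ℕ) + 1 = j) :
    adjacentPerm hinv i * adjacentPerm hinv j * adjacentPerm hinv i =
      adjacentPerm hinv j * adjacentPerm hinv i * adjacentPerm hinv j := by
  ext1 f
  simp only [Perm.mul_apply, adjacentPerm, Function.Involutive.coe_toPerm]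
  rw [show i.succ = j.castSucc from Fin.ext (by simp [hij])]
  exact applyAt_braid hYBE (by simp [Fin.ext_iff]; omega) (by simp [Fin.ext_iff])
    (by simp [Fin.ext_iff]; omega) f

theorem adjacentPerm_comm (hinv : r ∘ r = id) {i j : Fin n} (hij : (i : ℕ) + 1 < j) :
    adjacentPerm hinv i * adjacentPerm hinv j = adjacentPerm hinv j * adjacentPerm hinv i := by
  ext1 f
  simp only [Perm.mul_apply, adjacentPerm, Function.Involutive.coe_toPerm]
  exact applyAt_comm (by simp [Fin.ext_iff]; omega) (by simp [Fin.ext_iff]; omega)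
    (by simp [Fin.ext_iff]; omega) (by simp [Fin.ext_iff]; omega) f

end Adjacent

/-- for an involutive set-theoretic solution `r` of the YBE on a nonempty finite
set `X` and `n ≥ 2`, there is a group homomorphism `ρ : Equiv.Perm (Fin n) → Equiv.Perm (Fin n → X)`
sending the adjacent transposition of `k-1` and `k` to `σ_k` for every `1 ≤ k ≤ n - 1`. -/
theorem exists_symmetricGroup_hom_of_involutive_ybe
    {X : Type*} [DecidableEq X]
    (r : X × X → X × X) (hYBE : SetTheoreticYBE r) (hinv : r ∘ r = id)
    (n : ℕ) :
    ∃ ρ : Equiv.Perm (Fin n) →* Equiv.Perm (Fin n → X),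
      ∀ (k : ℕ) (h1 : 1 ≤ k) (h2 : k < n),
        ⇑(ρ (Equiv.swap (⟨k - 1, by omega⟩ : Fin n) ⟨k, h2⟩)) = sigmaMap r n k := by
  obtain _ | n := n
  · exact ⟨1, fun k _ h2 => absurd h2 (Nat.not_lt_zero k)⟩
  obtain ⟨ρ, hρ⟩ := Perm.exists_monoidHom_of_coxeter_relations (adjacentPerm hinv)
    (adjacentPerm_mul_self hinv) (fun _ _ => adjacentPerm_braid hYBE hinv)
    (fun _ _ => adjacentPerm_comm hinv)
  refine ⟨ρ, fun k h1 h2 => ?_⟩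
  obtain ⟨i, rfl⟩ : ∃ i : Fin n, k = i + 1 := ⟨⟨k - 1, by omega⟩, by simp; omega⟩
  rw [sigmaMap_eq_applyAt h1 h2]
  exact congrArg DFunLike.coe (hρ i)
end

section
/- Let X be a set, λ, ρ : X → X → X maps such that r(x,y) := (λ_x(y), ρ_y(x)) satisfies the set-theoretic Yang–Baxter equation, and j : X → X an involution (j ∘ j = id). Suppose the crossing identity holds: for all x₁, x₂, x₃, x₄ ∈ X, (x₂ = λ_{x₃}(x₄) ∧ x₁ = ρ_{x₄}(x₃)) holds if and only if (x₁ = λ_{j(x₂)}(x₃) ∧ j(x₄) = ρ_{x₃}(j(x₂))) holds. Then for every x ∈ X, both λ_x and ρ_x are bijections of X (so r is non-degenerate), and ρ_x = j ∘ (λ_x)⁻¹ ∘ j; equivalently ρ_x ∘ j ∘ λ_x ∘ j = id and λ_x ∘ j ∘ ρ_x ∘ j = id. -/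
/-- crossing symmetry of a set-theoretic solution
`r(x,y) = (λ_x(y), ρ_y(x))` w.r.t. an involution `j` implies non-degeneracy,
with `ρ_x = j ∘ λ_x⁻¹ ∘ j`, i.e. `ρ_x ∘ j ∘ λ_x ∘ j = id` and `λ_x ∘ j ∘ ρ_x ∘ j = id`. -/
theorem nondegenerate_of_crossing
    {X : Type*} (lam rho : X → X → X)
    (hYBE : SetTheoreticYBE (fun p : X × X => (lam p.1 p.2, rho p.2 p.1)))
    (j : X → X) (hj : j ∘ j = id)
    (hcross : ∀ x₁ x₂ x₃ x₄ : X,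
      (x₂ = lam x₃ x₄ ∧ x₁ = rho x₄ x₃) ↔ (x₁ = lam (j x₂) x₃ ∧ j x₄ = rho x₃ (j x₂))) :
    ∀ x : X, Function.Bijective (lam x) ∧ Function.Bijective (rho x) ∧
      rho x ∘ j ∘ lam x ∘ j = id ∧ lam x ∘ j ∘ rho x ∘ j = id := by
  have hj' : ∀ y, j (j y) = y := fun y => congrFun hj y
  have key1 : ∀ t a, rho t (j (lam t (j a))) = a := by
    intro t a
    have h := (hcross (rho (j a) t) (lam t (j a)) t (j a)).mp ⟨rfl, rfl⟩
    rw [← h.2, hj']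
  have key2 : ∀ t a, lam t (j (rho t (j a))) = a := by
    intro t a
    exact ((hcross (lam (j a) t) a t (j (rho t (j a)))).mpr ⟨rfl, by rw [hj']⟩).1.symm
  intro x
  have hli : Function.LeftInverse (fun y => j (rho x (j y))) (lam x) := by
    intro y
    have h := key1 x (j y)
    rw [hj'] at h
    show j (rho x (j (lam x y))) = y
    rw [h, hj']
  have hri : Function.RightInverse (fun y => j (rho x (j y))) (lam x) := fun y => key2 x y
  have hli' : Function.LeftInverse (fun y => j (lam x (j y))) (rho x) := by
    intro y
    have h := key2 x (j y)
    rw [hj'] at h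
    show j (lam x (j (rho x y))) = y
    rw [h, hj']
  have hri' : Function.RightInverse (fun y => j (lam x (j y))) (rho x) := fun y => key1 x y
  refine ⟨⟨hli.injective, hri.surjective⟩, ⟨hli'.injective, hri'.surjective⟩, ?_, ?_⟩
  · funext y; exact key1 x y
  · funext y; exact key2 x y
end

section
/- Let 𝓗 be a complex Hilbert space and H ⊆ 𝓗 a standard subspace. Then the symplectic complement H' := {ψ ∈ 𝓗 : Im⟨ψ, h⟩ = 0 for all h ∈ H} is again a standard subspace of 𝓗. -/
open scoped ComplexInnerProductSpace in
/-- A standard subspace of a complex Hilbert space `𝓗`: a closed real-linear subspace `H`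
such that `H + iH` is dense and `H ∩ iH = {0}`. -/
def IsStandardSubspace {𝓗 : Type*} [NormedAddCommGroup 𝓗] [InnerProductSpace ℂ 𝓗]
    [CompleteSpace 𝓗] (H : Submodule ℝ 𝓗) : Prop :=
  IsClosed (H : Set 𝓗) ∧
    Dense {x : 𝓗 | ∃ h₁ ∈ H, ∃ h₂ ∈ H, x = h₁ + Complex.I • h₂} ∧
    ∀ x ∈ H, (∃ h ∈ H, x = Complex.I • h) → x = 0

/-- The symplectic complement `H' = {ψ : Im⟪ψ, h⟫ = 0 for all h ∈ H}` of a real subspace `H`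
of a complex Hilbert space. -/
def symplecticComplement {𝓗 : Type*} [NormedAddCommGroup 𝓗] [InnerProductSpace ℂ 𝓗]
    (H : Submodule ℝ 𝓗) : Submodule ℝ 𝓗 where
  carrier := {ψ : 𝓗 | ∀ h ∈ H, (inner ℂ ψ h : ℂ).im = 0}
  add_mem' := by
    intro a b ha hb h hh
    rw [inner_add_left]
    simp [ha h hh, hb h hh]
  zero_mem' := by
    intro h hh
    simp
  smul_mem' := by
    intro c x hx h hh
    rw [show (c : ℝ) • x = (c : ℂ) • x by simp [Complex.coe_smul], inner_smul_left]
    simp [hx h hh]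

/-!
Write `ω(x, y) = Im⟪x, y⟫`. Since `Re⟪i x, y⟫ = ω(x, y)`, the complement `H'` is `i · H^⊥` for the
real inner product, so `H'' = H^⊥⊥` is the closure of `H`. Moreover `⟪k, z⟫ = 0` for all `k ∈ K`
exactly when `z` and `i z` both lie in `K'`. Hence a vector of `H' ∩ iH'` is orthogonal to the dense
set `H + iH`, so it vanishes; and a vector orthogonal to `H' + iH'` lies in
`H'' ∩ iH'' = H ∩ iH = {0}`.
-/

open scoped ComplexInnerProductSpace Pointwise

section

variable {𝓗 : Type*} [NormedAddCommGroup 𝓗] [InnerProductSpace ℂ 𝓗]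

def IsCyclicSubspace (H : Submodule ℝ 𝓗) : Prop :=
  Dense {x : 𝓗 | ∃ h₁ ∈ H, ∃ h₂ ∈ H, x = h₁ + Complex.I • h₂}

def IsSeparatingSubspace (H : Submodule ℝ 𝓗) : Prop :=
  ∀ x ∈ H, (∃ h ∈ H, x = Complex.I • h) → x = 0

attribute [local instance] InnerProductSpace.complexToReal

lemma isClosed_symplecticComplement (H : Submodule ℝ 𝓗) :
    IsClosed (symplecticComplement H : Set 𝓗) := by
  have : (symplecticComplement H : Set 𝓗) = ⋂ h ∈ H, {ψ : 𝓗 | (⟪ψ, h⟫).im = 0} := by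
    ext; simp [symplecticComplement]
  rw [this]
  exact isClosed_biInter fun h _ ↦ isClosed_eq (by fun_prop) continuous_const

lemma im_inner_eq_zero_comm (x y : 𝓗) : (⟪x, y⟫).im = 0 ↔ (⟪y, x⟫).im = 0 := by
  rw [← inner_conj_symm x y, Complex.conj_im, neg_eq_zero]

lemma I_smul_mem_orthogonal_iff_mem_symplecticComplement {H : Submodule ℝ 𝓗} {ψ : 𝓗} :
    Complex.I • ψ ∈ Hᗮ ↔ ψ ∈ symplecticComplement H := by
  refine forall₂_congr fun h _ ↦ ?_
  rw [real_inner_eq_re_inner ℂ, inner_smul_right, im_inner_eq_zero_comm]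
  simp

lemma symplecticComplement_symplecticComplement [CompleteSpace 𝓗] (H : Submodule ℝ 𝓗) :
    symplecticComplement (symplecticComplement H) = H.topologicalClosure := by
  rw [← Submodule.orthogonal_orthogonal_eq_closure]
  ext z
  have hω : ∀ ψ, (⟪z, ψ⟫).im = 0 ↔ inner ℝ (Complex.I • ψ) z = 0 := fun ψ ↦ by
    rw [im_inner_eq_zero_comm, real_inner_eq_re_inner ℂ]
    simp [inner_smul_left]
  constructor
  · intro hz w hw
    have hψ : -Complex.I • w ∈ symplecticComplement H :=
      I_smul_mem_orthogonal_iff_mem_symplecticComplement.1 (by simpa [smul_smul] using hw)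
    simpa [smul_smul] using (hω _).1 (hz _ hψ)
  · intro hz ψ hψ
    exact (hω ψ).2 (hz _ (I_smul_mem_orthogonal_iff_mem_symplecticComplement.2 hψ))

lemma inner_eq_zero_iff_im_inner_eq_zero (k z : 𝓗) :
    ⟪k, z⟫ = 0 ↔ (⟪z, k⟫).im = 0 ∧ (⟪Complex.I • z, k⟫).im = 0 := by
  rw [← inner_conj_symm, map_eq_zero, Complex.ext_iff]
  simp [and_comm]

lemma forall_inner_eq_zero_iff_mem_symplecticComplement {K : Submodule ℝ 𝓗} {z : 𝓗} :
    (∀ k ∈ K, ⟪k, z⟫ = 0) ↔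
      z ∈ symplecticComplement K ∧ Complex.I • z ∈ symplecticComplement K := by
  simp only [inner_eq_zero_iff_im_inner_eq_zero]
  exact forall₂_and

lemma IsCyclicSubspace.eq_zero_of_forall_inner_eq_zero {H : Submodule ℝ 𝓗}
    (hH : IsCyclicSubspace H) {z : 𝓗} (hz : ∀ h ∈ H, ⟪h, z⟫ = 0) : z = 0 := by
  refine hH.eq_zero_of_inner_right ℂ fun v ↦ ?_
  rintro ⟨h₁, hh₁, h₂, hh₂, rfl⟩
  simp [inner_add_left, inner_smul_left, hz h₁ hh₁, hz h₂ hh₂]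

lemma isCyclicSubspace_of_forall_inner_eq_zero [CompleteSpace 𝓗] {H : Submodule ℝ 𝓗}
    (hH : ∀ z, (∀ h ∈ H, ⟪h, z⟫ = 0) → z = 0) : IsCyclicSubspace H := by
  have hsub : ((H ⊔ Complex.I • H : Submodule ℝ 𝓗) : Set 𝓗) ⊆
      {x | ∃ h₁ ∈ H, ∃ h₂ ∈ H, x = h₁ + Complex.I • h₂} := by
    intro x hx
    obtain ⟨h₁, hh₁, _, hy, rfl⟩ := Submodule.mem_sup.1 hx
    obtain ⟨h₂, hh₂, rfl⟩ := (Submodule.mem_smul_pointwise_iff_exists _ _ _).1 hy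
    exact ⟨h₁, hh₁, h₂, hh₂, rfl⟩
  refine Dense.mono hsub ?_
  rw [Submodule.dense_iff_topologicalClosure_eq_top, Submodule.topologicalClosure_eq_top_iff,
    Submodule.eq_bot_iff]
  refine fun z hz ↦ hH z fun h hh ↦ Complex.ext ?_ ?_
  · simpa [real_inner_eq_re_inner ℂ] using hz h (Submodule.mem_sup_left hh)
  · simpa [real_inner_eq_re_inner ℂ, inner_smul_left] using
      hz _ (Submodule.mem_sup_right (Submodule.smul_mem_pointwise_smul h _ H hh))

lemma IsCyclicSubspace.isSeparatingSubspace_symplecticComplement {H : Submodule ℝ 𝓗}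
    (hH : IsCyclicSubspace H) : IsSeparatingSubspace (symplecticComplement H) := by
  rintro _ hIh ⟨h, hh, rfl⟩
  have : h = 0 := hH.eq_zero_of_forall_inner_eq_zero
    (forall_inner_eq_zero_iff_mem_symplecticComplement.2 ⟨hh, hIh⟩)
  rw [this, smul_zero]

lemma IsSeparatingSubspace.isCyclicSubspace_symplecticComplement [CompleteSpace 𝓗]
    {H : Submodule ℝ 𝓗} (hcl : IsClosed (H : Set 𝓗)) (hH : IsSeparatingSubspace H) :
    IsCyclicSubspace (symplecticComplement H) := by
  refine isCyclicSubspace_of_forall_inner_eq_zero fun z hz ↦ ?_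
  rw [forall_inner_eq_zero_iff_mem_symplecticComplement, symplecticComplement_symplecticComplement,
    hcl.submodule_topologicalClosure_eq] at hz
  obtain ⟨hzH, hIzH⟩ := hz
  exact (smul_eq_zero.1 (hH _ hIzH ⟨z, hzH, rfl⟩)).resolve_left Complex.I_ne_zero

end

/-- the symplectic complement of a standard subspace is a standard subspace. -/
theorem isStandardSubspace_symplecticComplement
    {𝓗 : Type*} [NormedAddCommGroup 𝓗] [InnerProductSpace ℂ 𝓗] [CompleteSpace 𝓗]
    (H : Submodule ℝ 𝓗) (hH : IsStandardSubspace H) :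
    IsStandardSubspace (symplecticComplement H) := by
  obtain ⟨hcl, hcyc, hsep⟩ : IsClosed (H : Set 𝓗) ∧ IsCyclicSubspace H ∧ IsSeparatingSubspace H :=
    hH
  exact ⟨isClosed_symplecticComplement H,
    hsep.isCyclicSubspace_symplecticComplement hcl,
    hcyc.isSeparatingSubspace_symplecticComplement⟩
end

section
/- Let X be a nonempty type. On the Hilbert space ℓ²(List X) (the lp space of square-summable complex-valued functions on the type of finite words over X), for each x ∈ X let a*_x be the bounded left-creation operator defined by (a*_x f)(w) = f(w') if w = x :: w' for some word w', and (a*_x f)(w) = 0 if w does not begin with x, and let a_x := (a*_x)* be its Hilbert-space adjoint. Then the Cuntz relations hold: a_x ∘ a*_y = id if x = y and a_x ∘ a*_y = 0 if x ≠ y. -/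
open scoped ComplexInnerProductSpace

/-- on the full Fock space `ℓ²(List X)` over a nonempty alphabet `X`, the
left-creation operators `a*_x` (prepending the letter `x`) and their adjoints
`a_x = (a*_x)*` satisfy the Cuntz relations: `a_x ∘ a*_y = id` if `x = y` and
`a_x ∘ a*_y = 0` if `x ≠ y`. -/
theorem cuntz_relations {X : Type*} [Nonempty X]
    (astar : X → (lp (fun _ : List X => ℂ) 2 →L[ℂ] lp (fun _ : List X => ℂ) 2))
    (h_nil : ∀ (x : X) (f : lp (fun _ : List X => ℂ) 2), astar x f [] = 0)
    (h_cons_eq : ∀ (x : X) (f : lp (fun _ : List X => ℂ) 2) (w : List X),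
      astar x f (x :: w) = f w)
    (h_cons_ne : ∀ (x y : X) (f : lp (fun _ : List X => ℂ) 2) (w : List X),
      y ≠ x → astar x f (y :: w) = 0) :
    ∀ x y : X,
      (x = y → (ContinuousLinearMap.adjoint (astar x)).comp (astar y) =
        ContinuousLinearMap.id ℂ (lp (fun _ : List X => ℂ) 2)) ∧
      (x ≠ y → (ContinuousLinearMap.adjoint (astar x)).comp (astar y) = 0) := by
  intro x y
  constructor
  · rintro rfl
    refine ContinuousLinearMap.ext fun g => ?_
    apply ext_inner_right ℂ
    intro f
    simp only [ContinuousLinearMap.comp_apply, ContinuousLinearMap.id_apply]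
    rw [ContinuousLinearMap.adjoint_inner_left]
    rw [lp.inner_eq_tsum, lp.inner_eq_tsum]
    have hinj : Function.Injective (fun w : List X => x :: w) := by
      intro a b h; simpa using h
    rw [← hinj.tsum_eq]
    · congr 1
      ext w
      simp [h_cons_eq]
    · intro w hw
      rcases w with _ | ⟨z, w⟩
      · exact absurd (by simp [h_nil]) hw
      · rcases eq_or_ne z x with rfl | hz
        · exact ⟨w, rfl⟩
        · exact absurd (by simp [h_cons_ne _ _ _ _ hz]) hw
  · intro hxy
    refine ContinuousLinearMap.ext fun g => ?_
    apply ext_inner_right ℂ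
    intro f
    simp only [ContinuousLinearMap.comp_apply, ContinuousLinearMap.zero_apply,
      inner_zero_left]
    rw [ContinuousLinearMap.adjoint_inner_left, lp.inner_eq_tsum]
    convert tsum_zero with w
    rcases w with _ | ⟨z, w⟩
    · simp [h_nil]
    · rcases eq_or_ne z x with rfl | hz
      · simp only [h_cons_ne _ _ _ _ hxy]
        simp
      · simp only [h_cons_ne _ _ _ _ hz]
        simp
end
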